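/- Legendre product coefficients recurrence: let y = Σ c_k P_k be a formal Legendre series and h_{i,j} the coefficient of P_i in the Legendre expansion of P_j·y. Then h_{i,0} = c_i, h_{0,j} = c_j/(2j+1), h_{i,1} = ((i+1)/(2i+3))c_{i+1} + (i/(2i−1))c_{i−1} for i ≥ 1, and h_{i,j+1} = ((2j+1)/(j+1))·[((i+1)/(2i+3))h_{i+1,j} + (i/(2i−1))h_{i−1,j}] − (j/(j+1))h_{i,j−1} for i,j ≥ 1. -/

import Mathlib

/-!
Write `⟨p, q⟩ = ∫_{-1}^{1} p q` and `y_M = ∑_{k < M} c_k P_k`. Since `P_i P_j` has degree `i + j`,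
orthogonality gives `h_{i,j} = (2i+1)/2 · ⟨P_i P_j, y_M⟩` for every `M > i + j`, so all four
formulas are statements about the polynomials `P_i P_j`. The first two follow from orthogonality and
`⟨P_n, P_n⟩ = 2/(2n+1)`; the last two from Bonnet's recurrence
`x P_n = (n+1)/(2n+1) P_{n+1} + n/(2n+1) P_{n-1}`, expanded on `x P_i P_j` once through `x P_i` and
once through `x P_j`.

Orthogonality and the norm come from Rodrigues' formula by `n` integrations by parts (the boundary
terms vanish because `(x² - 1)^(n-m)` divides the `m`-th derivative of `(x² - 1)^n`). Bonnet's
recurrence holds because the difference of its two sides has degree at most `n + 1` and is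
orthogonal to every `P_m`: for `m = n ± 1` by the leading coefficients and the norms, for `m = n` by parity.
-/

open Polynomial

/-- Legendre polynomials (Rodrigues' formula), normalized so that `P n 1 = 1`. -/
noncomputable def legendreP (n : ℕ) : Polynomial ℝ :=
  Polynomial.C (1 / (2 ^ n * (n.factorial : ℝ))) *
    (Polynomial.derivative^[n] ((Polynomial.X ^ 2 - 1) ^ n))

/-- The coefficient of `Pᵢ` in the formal Legendre expansion of `Pⱼ · Σₖ cₖ Pₖ`, computed
from the `L²(−1,1)` linearization coefficients (only `k ≤ i + j` contribute). -/
noncomputable def legProdCoeff (c : ℕ → ℝ) (i j : ℕ) : ℝ :=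
  ∑ k ∈ Finset.range (i + j + 1),
    c k * ((2 * (i : ℝ) + 1) / 2) *
      ∫ t in (-1 : ℝ)..1, (legendreP i).eval t * (legendreP j).eval t * (legendreP k).eval t

open intervalIntegral

theorem Polynomial.iterate_derivative_comp_neg_X {R : Type*} [CommRing R] (p : R[X]) (m : ℕ) :
    derivative^[m] (p.comp (-X)) = (-1) ^ m * (derivative^[m] p).comp (-X) := by
  induction m with
  | zero => simp
  | succ m ih =>
    rw [Function.iterate_succ_apply', ih, Function.iterate_succ_apply', derivative_mul,
      derivative_comp]
    simp [pow_succ, derivative_pow]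

open Nat in
theorem Polynomial.iterate_derivative_of_natDegree_le {R : Type*} [CommSemiring R] {p : R[X]}
    {n : ℕ} (h : p.natDegree ≤ n) : derivative^[n] p = C (n ! * p.coeff n) := by
  rw [eq_C_of_natDegree_le_zero ((natDegree_iterate_derivative p n).trans (by omega)),
    coeff_iterate_derivative, zero_add, Nat.descFactorial_self, nsmul_eq_mul]

theorem intervalIntegral.integral_eq_zero_of_odd {f : ℝ → ℝ} (hf : ∀ x, f (-x) = -f x) (a : ℝ) :
    ∫ x in -a..a, f x = 0 := by
  have h := integral_comp_neg (a := -a) (b := a) f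
  simp only [hf, integral_neg, neg_neg] at h
  linarith

lemma integral_one_sub_sq_pow_succ (n : ℕ) :
    (2 * (n : ℝ) + 3) * ∫ x in (-1 : ℝ)..1, (1 - x ^ 2) ^ (n + 1) =
      (2 * (n : ℝ) + 2) * ∫ x in (-1 : ℝ)..1, (1 - x ^ 2) ^ n := by
  have hderiv : ∀ x : ℝ, HasDerivAt (fun x => x * (1 - x ^ 2) ^ (n + 1))
      ((2 * (n : ℝ) + 3) * (1 - x ^ 2) ^ (n + 1) - (2 * (n : ℝ) + 2) * (1 - x ^ 2) ^ n) x := by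
    intro x
    have h := (X * (1 - X ^ 2) ^ (n + 1) : ℝ[X]).hasDerivAt x
    simp only [eval_mul, eval_sub, eval_pow, eval_X, eval_one] at h
    refine h.congr_deriv ?_
    simp [derivative_pow]
    ring
  have hftc := integral_eq_sub_of_hasDerivAt (a := -1) (b := 1) (fun x _ => hderiv x)
    (Continuous.intervalIntegrable (by fun_prop) _ _)
  rw [integral_sub (Continuous.intervalIntegrable (by fun_prop) _ _)
    (Continuous.intervalIntegrable (by fun_prop) _ _), integral_const_mul,
    integral_const_mul] at hftc
  norm_num at hftc
  linarith

open Nat in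
lemma integral_one_sub_sq_pow (n : ℕ) :
    ∫ x in (-1 : ℝ)..1, (1 - x ^ 2) ^ n = 2 ^ (2 * n + 1) * (n ! : ℝ) ^ 2 / (2 * n + 1)! := by
  induction n with
  | zero => norm_num
  | succ n ih =>
    have h := integral_one_sub_sq_pow_succ n
    rw [ih] at h
    rw [show 2 * (n + 1) + 1 = 2 * n + 1 + 1 + 1 by ring, Nat.factorial_succ (2 * n + 1 + 1),
      Nat.factorial_succ (2 * n + 1), Nat.factorial_succ, pow_succ, pow_succ]
    rw [eq_div_iff (by positivity)]
    field_simp at h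
    push_cast
    linear_combination (2 * (n : ℝ) + 2) * h

lemma intervalIntegrable_eval_mul_eval (p q : ℝ[X]) (a b : ℝ) :
    IntervalIntegrable (fun x => p.eval x * q.eval x) MeasureTheory.volume a b :=
  (by fun_prop : Continuous fun x => p.eval x * q.eval x).intervalIntegrable a b

noncomputable def l2Pairing : ℝ[X] →ₗ[ℝ] ℝ[X] →ₗ[ℝ] ℝ :=
  LinearMap.mk₂ ℝ (fun p q => ∫ x in (-1 : ℝ)..1, p.eval x * q.eval x)
    (fun p p' q => by
      simp only [eval_add, add_mul]
      exact integral_add (intervalIntegrable_eval_mul_eval _ _ _ _)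
        (intervalIntegrable_eval_mul_eval _ _ _ _))
    (fun a p q => by simp only [eval_smul, smul_eq_mul, mul_assoc, integral_const_mul])
    (fun p q q' => by
      simp only [eval_add, mul_add]
      exact integral_add (intervalIntegrable_eval_mul_eval _ _ _ _)
        (intervalIntegrable_eval_mul_eval _ _ _ _))
    (fun a p q => by simp only [eval_smul, smul_eq_mul, mul_left_comm, integral_const_mul])

lemma l2Pairing_apply (p q : ℝ[X]) :
    l2Pairing p q = ∫ x in (-1 : ℝ)..1, p.eval x * q.eval x := rfl

lemma l2Pairing_comm (p q : ℝ[X]) : l2Pairing p q = l2Pairing q p := by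
  simp only [l2Pairing_apply, mul_comm]

lemma l2Pairing_X_mul (p q : ℝ[X]) : l2Pairing (X * p) q = l2Pairing p (X * q) := by
  simp only [l2Pairing_apply, eval_mul, eval_X, mul_left_comm, mul_assoc]

lemma l2Pairing_derivative_add (p q : ℝ[X]) :
    l2Pairing (derivative p) q + l2Pairing p (derivative q) =
      p.eval 1 * q.eval 1 - p.eval (-1) * q.eval (-1) := by
  rw [l2Pairing_apply, l2Pairing_apply, ← integral_add (intervalIntegrable_eval_mul_eval _ _ _ _)
    (intervalIntegrable_eval_mul_eval _ _ _ _)]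
  exact integral_deriv_mul_eq_sub (fun x _ => p.hasDerivAt x) (fun x _ => q.hasDerivAt x)
    ((derivative p).continuous.intervalIntegrable _ _)
    ((derivative q).continuous.intervalIntegrable _ _)

lemma l2Pairing_iterate_derivative_X_sq_sub_one_pow {m n : ℕ} (hm : m ≤ n) (q : ℝ[X]) :
    l2Pairing q (derivative^[m] ((X ^ 2 - 1) ^ n)) =
      (-1) ^ m * l2Pairing (derivative^[m] q) ((X ^ 2 - 1) ^ n) := by
  induction m generalizing q with
  | zero => simp
  | succ m ih =>
    have hvanish : ∀ x : ℝ, x ^ 2 = 1 → (derivative^[m] ((X ^ 2 - 1) ^ n)).eval x = 0 := by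
      intro x hx
      obtain ⟨r, hr⟩ := pow_sub_dvd_iterate_derivative_pow (X ^ 2 - 1 : ℝ[X]) n m
      simp [hr, hx, Nat.sub_ne_zero_of_lt hm]
    have hibp := l2Pairing_derivative_add q (derivative^[m] ((X ^ 2 - 1) ^ n))
    rw [hvanish 1 (by norm_num), hvanish (-1) (by norm_num), mul_zero, mul_zero, sub_zero,
      ← Function.iterate_succ_apply' derivative] at hibp
    rw [eq_neg_of_add_eq_zero_right hibp, ih (by omega), ← Function.iterate_succ_apply, pow_succ]
    ring

lemma natDegree_X_sq_sub_one : (X ^ 2 - 1 : ℝ[X]).natDegree = 2 := by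
  compute_degree!

lemma natDegree_legendreP_le (n : ℕ) : (legendreP n).natDegree ≤ n := by
  refine natDegree_C_mul_le _ _ |>.trans <| (natDegree_iterate_derivative _ _).trans ?_
  rw [natDegree_pow, natDegree_X_sq_sub_one]
  omega

lemma degree_legendreP_lt {m n : ℕ} (h : m < n) : (legendreP m).degree < n :=
  (degree_le_of_natDegree_le (natDegree_legendreP_le m)).trans_lt (by exact_mod_cast h)

open Nat in
lemma coeff_legendreP_self (n : ℕ) :
    (legendreP n).coeff n = (2 * n)! / (2 ^ n * n ! ^ 2) := by
  have hlead : ((X ^ 2 - 1 : ℝ[X]) ^ n).coeff (2 * n) = 1 := by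
    have := ((monic_X_pow_sub_C (1 : ℝ) two_ne_zero).pow n).coeff_natDegree
    rwa [map_one, natDegree_pow, natDegree_X_sq_sub_one, mul_comm] at this
  rw [legendreP, coeff_C_mul, coeff_iterate_derivative, ← two_mul, hlead, nsmul_one,
    Nat.descFactorial_eq_div (by omega), show 2 * n - n = n by omega,
    Nat.cast_div (Nat.factorial_dvd_factorial (by omega)) (by positivity)]
  field_simp

lemma coeff_legendreP_self_pos (n : ℕ) : 0 < (legendreP n).coeff n := by
  rw [coeff_legendreP_self]; positivity

lemma legendreP_zero : legendreP 0 = 1 := by simp [legendreP]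

lemma legendreP_one : legendreP 1 = X := by
  simp [legendreP, one_add_one_eq_two, ← mul_assoc, ← C_mul]

lemma legendreP_comp_neg_X (n : ℕ) : (legendreP n).comp (-X) = (-1) ^ n * legendreP n := by
  have h := iterate_derivative_comp_neg_X ((X ^ 2 - 1 : ℝ[X]) ^ n) n
  rw [show ((X ^ 2 - 1 : ℝ[X]) ^ n).comp (-X) = (X ^ 2 - 1) ^ n by simp] at h
  have hsq : ((-1 : ℝ[X]) ^ n) * (-1) ^ n = 1 := by rw [← mul_pow]; simp
  have hD := congrArg ((-1 : ℝ[X]) ^ n * ·) h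
  simp only [← mul_assoc, hsq, one_mul] at hD
  rw [legendreP, mul_comp, C_comp, ← hD]
  ring

lemma eval_neg_legendreP (n : ℕ) (x : ℝ) :
    (legendreP n).eval (-x) = (-1) ^ n * (legendreP n).eval x := by
  simpa using congrArg (eval x) (legendreP_comp_neg_X n)

open Nat in
lemma l2Pairing_legendreP (q : ℝ[X]) (n : ℕ) :
    l2Pairing q (legendreP n) =
      (-1) ^ n / (2 ^ n * n !) * l2Pairing (derivative^[n] q) ((X ^ 2 - 1) ^ n) := by
  rw [legendreP, ← smul_eq_C_mul, map_smul, smul_eq_mul,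
    l2Pairing_iterate_derivative_X_sq_sub_one_pow le_rfl]
  ring

lemma l2Pairing_legendreP_eq_zero_of_degree_lt {q : ℝ[X]} {n : ℕ} (h : q.degree < n) :
    l2Pairing q (legendreP n) = 0 := by
  rw [l2Pairing_legendreP, iterate_derivative_eq_zero_of_degree_lt h, map_zero,
    LinearMap.zero_apply, mul_zero]

lemma l2Pairing_legendreP_of_ne {m n : ℕ} (h : m ≠ n) :
    l2Pairing (legendreP m) (legendreP n) = 0 := by
  rcases h.lt_or_gt with hlt | hlt
  · exact l2Pairing_legendreP_eq_zero_of_degree_lt (degree_legendreP_lt hlt)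
  · rw [l2Pairing_comm]
    exact l2Pairing_legendreP_eq_zero_of_degree_lt (degree_legendreP_lt hlt)

open Nat in
lemma l2Pairing_legendreP_self (n : ℕ) :
    l2Pairing (legendreP n) (legendreP n) = 2 / (2 * n + 1) := by
  have hsign : ∫ x in (-1 : ℝ)..1, (x ^ 2 - 1) ^ n =
      (-1) ^ n * ∫ x in (-1 : ℝ)..1, (1 - x ^ 2) ^ n := by
    simp only [← integral_const_mul, ← mul_pow, neg_one_mul, neg_sub]
  have hsq : ((-1 : ℝ) ^ n) ^ 2 = 1 := by rw [← pow_mul, pow_mul']; norm_num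
  rw [l2Pairing_legendreP, iterate_derivative_of_natDegree_le (natDegree_legendreP_le n),
    coeff_legendreP_self, l2Pairing_apply]
  simp only [eval_C, eval_pow, eval_sub, eval_X, eval_one]
  rw [integral_const_mul, hsign, integral_one_sub_sq_pow, Nat.factorial_succ,
    show (2 : ℝ) ^ (2 * n + 1) = 2 * (2 ^ n) ^ 2 by ring]
  push_cast
  field_simp
  linear_combination hsq

lemma l2Pairing_X_mul_legendreP_self (n : ℕ) : l2Pairing (X * legendreP n) (legendreP n) = 0 := by
  have hsq : ((-1 : ℝ) ^ n) * (-1) ^ n = 1 := by rw [← mul_pow]; simp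
  simpa [l2Pairing_apply, mul_assoc] using
    integral_eq_zero_of_odd (f := fun x => x * ((legendreP n).eval x * (legendreP n).eval x))
      (fun x => by
        simp only [eval_neg_legendreP]
        linear_combination (-x * (legendreP n).eval x ^ 2) * hsq) 1

lemma degree_sub_smul_legendreP_lt {p : ℝ[X]} {n : ℕ} (hp : p.natDegree ≤ n) :
    (p - (p.coeff n / (legendreP n).coeff n) • legendreP n).degree < n := by
  rw [degree_lt_iff_coeff_zero]
  intro m hm
  obtain rfl | hlt := hm.eq_or_lt
  · rw [coeff_sub, coeff_smul, smul_eq_mul, div_mul_cancel₀ _ (coeff_legendreP_self_pos n).ne',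
      sub_self]
  · rw [coeff_sub, coeff_smul, coeff_eq_zero_of_natDegree_lt (hp.trans_lt hlt),
      coeff_eq_zero_of_natDegree_lt ((natDegree_legendreP_le n).trans_lt hlt), smul_zero, sub_zero]

lemma eq_zero_of_l2Pairing_legendreP_eq_zero {p : ℝ[X]} {n : ℕ} (hp : p.degree < n)
    (h : ∀ m < n, l2Pairing p (legendreP m) = 0) : p = 0 := by
  induction n generalizing p with
  | zero => simpa using hp
  | succ n ih =>
    set a := p.coeff n / (legendreP n).coeff n
    have hq : p - a • legendreP n = 0 := by
      refine ih (degree_sub_smul_legendreP_lt ?_) fun m hm => ?_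
      · exact natDegree_le_iff_coeff_eq_zero.mpr fun N hN =>
          (degree_lt_iff_coeff_zero _ _).mp hp N hN
      · rw [map_sub, map_smul, LinearMap.sub_apply, LinearMap.smul_apply, h m (by omega),
          l2Pairing_legendreP_of_ne (by omega), smul_zero, sub_zero]
    rw [sub_eq_zero] at hq
    have ha : a = 0 := by
      have := h n (by omega)
      rw [hq, map_smul, LinearMap.smul_apply, l2Pairing_legendreP_self, smul_eq_mul] at this
      simpa [(by positivity : (2 : ℝ) / (2 * n + 1) ≠ 0)] using this
    rw [hq, ha, zero_smul]

lemma natDegree_X_mul_legendreP_le (n : ℕ) : (X * legendreP n).natDegree ≤ n + 1 :=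
  natDegree_mul_le.trans (by rw [natDegree_X]; have := natDegree_legendreP_le n; omega)

open Nat in
lemma coeff_X_mul_legendreP_div_coeff_legendreP_succ (n : ℕ) :
    (X * legendreP n).coeff (n + 1) / (legendreP (n + 1)).coeff (n + 1) =
      (n + 1) / (2 * n + 1) := by
  rw [coeff_X_mul, coeff_legendreP_self, coeff_legendreP_self, mul_add_one, Nat.factorial_succ,
    Nat.factorial_succ (2 * n), Nat.factorial_succ]
  push_cast
  field_simp
  ring

lemma l2Pairing_X_mul_legendreP_succ (n : ℕ) :
    l2Pairing (X * legendreP n) (legendreP (n + 1)) =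
      2 * (n + 1) / ((2 * n + 1) * (2 * n + 3)) := by
  have horth := l2Pairing_legendreP_eq_zero_of_degree_lt
    (degree_sub_smul_legendreP_lt (p := X * legendreP n) (n := n + 1)
      (natDegree_X_mul_legendreP_le n))
  rw [map_sub, map_smul, LinearMap.sub_apply, LinearMap.smul_apply, sub_eq_zero,
    coeff_X_mul_legendreP_div_coeff_legendreP_succ, l2Pairing_legendreP_self, smul_eq_mul] at horth
  rw [horth]
  push_cast
  field_simp
  ring

theorem X_mul_legendreP_succ (n : ℕ) :
    X * legendreP (n + 1) = ((n + 2) / (2 * n + 3) : ℝ) • legendreP (n + 2) +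
      ((n + 1) / (2 * n + 3) : ℝ) • legendreP n := by
  rw [← sub_eq_zero, sub_add_eq_sub_sub]
  refine eq_zero_of_l2Pairing_legendreP_eq_zero (n := n + 3) ?_ fun m hm => ?_
  · refine (degree_le_of_natDegree_le ?_).trans_lt (by exact_mod_cast Nat.lt_succ_self (n + 2))
    refine (natDegree_sub_le _ _).trans (max_le ((natDegree_sub_le _ _).trans
      (max_le (natDegree_X_mul_legendreP_le _) ?_)) ?_)
    · exact (natDegree_smul_le _ _).trans (natDegree_legendreP_le _)
    · exact (natDegree_smul_le _ _).trans ((natDegree_legendreP_le _).trans (by omega))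
  simp only [map_sub, map_smul, LinearMap.sub_apply, LinearMap.smul_apply, smul_eq_mul]
  obtain rfl | rfl | rfl | hm := (by omega : m = n + 2 ∨ m = n + 1 ∨ m = n ∨ m < n)
  · rw [l2Pairing_X_mul_legendreP_succ, l2Pairing_legendreP_self,
      l2Pairing_legendreP_of_ne (by omega)]
    push_cast
    field_simp
    ring
  · rw [l2Pairing_X_mul_legendreP_self, l2Pairing_legendreP_of_ne (by omega),
      l2Pairing_legendreP_of_ne (by omega)]
    ring
  · rw [l2Pairing_X_mul, l2Pairing_comm, l2Pairing_X_mul_legendreP_succ, l2Pairing_legendreP_self,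
      l2Pairing_legendreP_of_ne (by omega)]
    field_simp
    ring
  · rw [l2Pairing_X_mul, l2Pairing_comm, l2Pairing_legendreP_eq_zero_of_degree_lt,
      l2Pairing_legendreP_of_ne (by omega), l2Pairing_legendreP_of_ne (by omega)]
    · ring
    · exact (degree_le_of_natDegree_le (natDegree_X_mul_legendreP_le m)).trans_lt
        (by exact_mod_cast (by omega : m + 1 < n + 1))

lemma legendreP_mul_legendreP_recurrence (i j : ℕ) :
    ((j + 2) / (2 * j + 3) : ℝ) • (legendreP (i + 1) * legendreP (j + 2)) +
        ((j + 1) / (2 * j + 3) : ℝ) • (legendreP (i + 1) * legendreP j) =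
      ((i + 2) / (2 * i + 3) : ℝ) • (legendreP (i + 2) * legendreP (j + 1)) +
        ((i + 1) / (2 * i + 3) : ℝ) • (legendreP i * legendreP (j + 1)) :=
  calc _ = legendreP (i + 1) * (X * legendreP (j + 1)) := by
        rw [X_mul_legendreP_succ, mul_add, mul_smul_comm, mul_smul_comm]
    _ = legendreP (j + 1) * (X * legendreP (i + 1)) := by ring
    _ = _ := by
        rw [X_mul_legendreP_succ, mul_add, mul_smul_comm, mul_smul_comm,
          mul_comm (legendreP (j + 1)), mul_comm (legendreP (j + 1))]

noncomputable def legendreSum (c : ℕ → ℝ) (M : ℕ) : ℝ[X] :=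
  ∑ k ∈ Finset.range M, c k • legendreP k

lemma l2Pairing_legendreP_legendreSum {c : ℕ → ℝ} {m M : ℕ} (hm : m < M) :
    l2Pairing (legendreP m) (legendreSum c M) = c m * (2 / (2 * m + 1)) := by
  rw [legendreSum, map_sum, Finset.sum_eq_single_of_mem m (Finset.mem_range.2 hm)]
  · rw [map_smul, l2Pairing_legendreP_self, smul_eq_mul]
  · intro k _ hk
    rw [map_smul, l2Pairing_legendreP_of_ne hk.symm, smul_zero]

lemma legProdCoeff_eq_l2Pairing (c : ℕ → ℝ) {i j M : ℕ} (h : i + j < M) :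
    legProdCoeff c i j =
      (2 * i + 1) / 2 * l2Pairing (legendreP i * legendreP j) (legendreSum c M) := by
  have hdeg : ∀ k, i + j < k → (legendreP i * legendreP j).degree < k := fun k hk =>
    (degree_le_of_natDegree_le (natDegree_mul_le.trans
      (add_le_add (natDegree_legendreP_le i) (natDegree_legendreP_le j)))).trans_lt
      (by exact_mod_cast hk)
  calc legProdCoeff c i j = ∑ k ∈ Finset.range (i + j + 1),
        (2 * i + 1) / 2 * l2Pairing (legendreP i * legendreP j) (c k • legendreP k) :=
        Finset.sum_congr rfl fun k _ => by
          simp only [map_smul, smul_eq_mul, l2Pairing_apply, eval_mul]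
          ring
    _ = ∑ k ∈ Finset.range M,
        (2 * i + 1) / 2 * l2Pairing (legendreP i * legendreP j) (c k • legendreP k) :=
        Finset.sum_subset (Finset.range_subset_range.2 (by omega)) fun k _ hk => by
          rw [map_smul, l2Pairing_legendreP_eq_zero_of_degree_lt (hdeg k (by simpa using hk)),
            smul_zero, mul_zero]
    _ = _ := by rw [legendreSum, map_sum, Finset.mul_sum]

lemma legProdCoeff_zero_right (c : ℕ → ℝ) (i : ℕ) : legProdCoeff c i 0 = c i := by
  rw [legProdCoeff_eq_l2Pairing c (M := i + 1) (by omega), legendreP_zero, mul_one,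
    l2Pairing_legendreP_legendreSum (by omega)]
  field_simp

lemma legProdCoeff_zero_left (c : ℕ → ℝ) (j : ℕ) :
    legProdCoeff c 0 j = c j / (2 * (j : ℝ) + 1) := by
  rw [legProdCoeff_eq_l2Pairing c (M := j + 1) (by omega), legendreP_zero, one_mul,
    l2Pairing_legendreP_legendreSum (by omega)]
  push_cast
  field_simp
  ring

lemma legProdCoeff_one_right (c : ℕ → ℝ) {i : ℕ} (hi : 1 ≤ i) :
    legProdCoeff c i 1 =
      (((i : ℝ) + 1) / (2 * (i : ℝ) + 3)) * c (i + 1) +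
        ((i : ℝ) / (2 * (i : ℝ) - 1)) * c (i - 1) := by
  obtain ⟨i, rfl⟩ := Nat.exists_eq_add_of_le' hi
  rw [legProdCoeff_eq_l2Pairing c (M := i + 3) (by omega), legendreP_one, mul_comm _ X,
    X_mul_legendreP_succ, map_add, map_smul, map_smul, LinearMap.add_apply, LinearMap.smul_apply,
    LinearMap.smul_apply, l2Pairing_legendreP_legendreSum (by omega),
    l2Pairing_legendreP_legendreSum (by omega), Nat.add_sub_cancel, smul_eq_mul, smul_eq_mul]
  push_cast
  rw [show 2 * ((i : ℝ) + 1) - 1 = 2 * i + 1 by ring]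
  field_simp
  ring

lemma legProdCoeff_succ_right (c : ℕ → ℝ) {i j : ℕ} (hi : 1 ≤ i) (hj : 1 ≤ j) :
    legProdCoeff c i (j + 1) =
      ((2 * (j : ℝ) + 1) / ((j : ℝ) + 1)) *
        ((((i : ℝ) + 1) / (2 * (i : ℝ) + 3)) * legProdCoeff c (i + 1) j +
          ((i : ℝ) / (2 * (i : ℝ) - 1)) * legProdCoeff c (i - 1) j) -
      ((j : ℝ) / ((j : ℝ) + 1)) * legProdCoeff c i (j - 1) := by
  obtain ⟨i, rfl⟩ := Nat.exists_eq_add_of_le' hi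
  obtain ⟨j, rfl⟩ := Nat.exists_eq_add_of_le' hj
  have hrel := congrArg (l2Pairing · (legendreSum c (i + j + 4)))
    (legendreP_mul_legendreP_recurrence i j)
  simp only [map_add, map_smul, LinearMap.add_apply, LinearMap.smul_apply, smul_eq_mul] at hrel
  rw [show j + 1 + 1 = j + 2 from rfl, show i + 1 + 1 = i + 2 from rfl]
  simp (disch := omega) only [Nat.add_sub_cancel, legProdCoeff_eq_l2Pairing c (M := i + j + 4)]
  push_cast
  rw [show 2 * ((i : ℝ) + 1) - 1 = 2 * i + 1 by ring]
  linear_combination (norm := skip) ((2 * j + 3) * (2 * i + 3) / (2 * (j + 2)) : ℝ) * hrel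
  field_simp
  ring

/-- the Legendre product coefficients `h_{i,j}` satisfy
`h_{i,0} = cᵢ`, `h_{0,j} = cⱼ/(2j+1)`,
`h_{i,1} = ((i+1)/(2i+3))c_{i+1} + (i/(2i−1))c_{i−1}` for `i ≥ 1`, and the recurrence
`h_{i,j+1} = ((2j+1)/(j+1))[((i+1)/(2i+3))h_{i+1,j} + (i/(2i−1))h_{i−1,j}] − (j/(j+1))h_{i,j−1}`
for `i, j ≥ 1`. -/
theorem legendre_product_coeff_recurrence (c : ℕ → ℝ) :
    (∀ i : ℕ, legProdCoeff c i 0 = c i) ∧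
    (∀ j : ℕ, legProdCoeff c 0 j = c j / (2 * (j : ℝ) + 1)) ∧
    (∀ i : ℕ, 1 ≤ i →
      legProdCoeff c i 1 =
        (((i : ℝ) + 1) / (2 * (i : ℝ) + 3)) * c (i + 1) +
          ((i : ℝ) / (2 * (i : ℝ) - 1)) * c (i - 1)) ∧
    (∀ i j : ℕ, 1 ≤ i → 1 ≤ j →
      legProdCoeff c i (j + 1) =
        ((2 * (j : ℝ) + 1) / ((j : ℝ) + 1)) *
          ((((i : ℝ) + 1) / (2 * (i : ℝ) + 3)) * legProdCoeff c (i + 1) j +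
            ((i : ℝ) / (2 * (i : ℝ) - 1)) * legProdCoeff c (i - 1) j) -
        ((j : ℝ) / ((j : ℝ) + 1)) * legProdCoeff c i (j - 1)) :=
  ⟨legProdCoeff_zero_right c, legProdCoeff_zero_left c, fun _ => legProdCoeff_one_right c,
    fun _ _ => legProdCoeff_succ_right c⟩
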